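/- Let A : ℝ^p ⇉ ℝ^p be monotone, F : int Z → ℝ a ν-self-concordant barrier with positive definite Hessians, t₊ > 0 and t > 0 with t₊ = (1 - σ)t for σ ∈ (0,1). Fix z ∈ int Z, and let ū solve 0 ∈ t(∇F(z) + ∇²F(z)(ū - z)) + A(ū) and z̄₊ solve 0 ∈ t₊(∇F(z) + ∇²F(z)(z̄₊ - z)) + A(z̄₊). Then ‖z̄₊ - ū‖_z ≤ (σ/(1-σ)) (‖∇F(z)‖*_z + ‖ū - z‖_z), and consequently, writing λ_t(z) := ‖z - ū‖_z and λ_{t₊}(z) := ‖z - z̄₊‖_z, one has λ_{t₊}(z) ≤ λ_t(z) + (σ/(1-σ))(√ν + λ_t(z)). -/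

import Mathlib

open Matrix

/-- Weighted norm `‖u‖_H := ⟨H u, u⟩^{1/2}`. -/
noncomputable def wnorm {p : ℕ} (H : Matrix (Fin p) (Fin p) ℝ) (u : Fin p → ℝ) : ℝ :=
  Real.sqrt ((H *ᵥ u) ⬝ᵥ u)

/-- A multivalued operator `A : ℝ^p ⇉ ℝ^p` is monotone. -/
def MonotoneOp {p : ℕ} (A : (Fin p → ℝ) → Set (Fin p → ℝ)) : Prop :=
  ∀ z1 z2 w1 w2 : Fin p → ℝ, w1 ∈ A z1 → w2 ∈ A z2 → 0 ≤ (w1 - w2) ⬝ᵥ (z1 - z2)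

/-!
Subtracting the two linearized inclusions and testing monotonicity of `A` against
`z̄₊ - ū` gives `(1 - σ)‖z̄₊ - ū‖_z² ≤ σ⟨∇F(z) + ∇²F(z)(ū - z), z̄₊ - ū⟩`; Cauchy–Schwarz
in the inner product `⟨∇²F(z)·, ·⟩` bounds the right side by
`σ(‖∇F(z)‖*_z + ‖ū - z‖_z)‖z̄₊ - ū‖_z`. The second claim follows by the triangle inequality,
since the barrier inequality at `u = ∇²F(z)⁻¹∇F(z)` reads `(‖∇F(z)‖*_z)² ≤ ν`.
-/

variable {p : ℕ} {H : Matrix (Fin p) (Fin p) ℝ}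

/-- `Fin p → ℝ` already carries the sup norm, so the norm induced by `H` is passed explicitly. -/
theorem wnorm_eq_norm (hH : H.PosSemidef) (u : Fin p → ℝ) :
    wnorm H u = @norm _ (H.toSeminormedAddCommGroup hH).toNorm u := by
  rw [@norm_eq_sqrt_re_inner ℝ _ _ (H.toSeminormedAddCommGroup hH) (H.toInnerProductSpace hH)]
  rfl

theorem wnorm_nonneg (H : Matrix (Fin p) (Fin p) ℝ) (u : Fin p → ℝ) : 0 ≤ wnorm H u :=
  Real.sqrt_nonneg _

theorem wnorm_sq (hH : H.PosSemidef) (u : Fin p → ℝ) : wnorm H u ^ 2 = (H *ᵥ u) ⬝ᵥ u :=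
  Real.sq_sqrt (by simpa [dotProduct_comm] using hH.dotProduct_mulVec_nonneg u)

theorem abs_dotProduct_mulVec_le_wnorm_mul_wnorm (hH : H.PosSemidef) (u v : Fin p → ℝ) :
    |(H *ᵥ u) ⬝ᵥ v| ≤ wnorm H u * wnorm H v := by
  rw [wnorm_eq_norm hH, wnorm_eq_norm hH, mul_comm]
  exact @abs_real_inner_le_norm _ (H.toSeminormedAddCommGroup hH) (H.toInnerProductSpace hH) v u

theorem wnorm_add_le (hH : H.PosSemidef) (u v : Fin p → ℝ) :
    wnorm H (u + v) ≤ wnorm H u + wnorm H v := by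
  simpa only [wnorm_eq_norm hH] using
    @norm_add_le _ (H.toSeminormedAddCommGroup hH).toSeminormedAddGroup u v

theorem wnorm_sub_rev (hH : H.PosSemidef) (u v : Fin p → ℝ) :
    wnorm H (u - v) = wnorm H (v - u) := by
  simpa only [wnorm_eq_norm hH] using
    @norm_sub_rev _ (H.toSeminormedAddCommGroup hH).toSeminormedAddGroup u v

theorem Matrix.PosDef.mulVec_inv_mulVec (hH : H.PosDef) (g : Fin p → ℝ) :
    H *ᵥ (H⁻¹ *ᵥ g) = g := by
  rw [mulVec_mulVec, mul_nonsing_inv _ ((isUnit_iff_isUnit_det H).mp hH.isUnit), one_mulVec]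

theorem wnorm_inv_eq_wnorm_inv_mulVec (hH : H.PosDef) (g : Fin p → ℝ) :
    wnorm H⁻¹ g = wnorm H (H⁻¹ *ᵥ g) := by
  rw [wnorm, wnorm, hH.mulVec_inv_mulVec, dotProduct_comm]

theorem wnorm_inv_le_sqrt (hH : H.PosDef) {g : Fin p → ℝ} {ν : ℝ}
    (hg : ∀ u, 2 * (g ⬝ᵥ u) - (H *ᵥ u) ⬝ᵥ u ≤ ν) :
    wnorm H⁻¹ g ≤ Real.sqrt ν := by
  have h := hg (H⁻¹ *ᵥ g)
  rw [hH.mulVec_inv_mulVec] at h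
  exact Real.sqrt_le_sqrt (by rw [dotProduct_comm]; linarith)

theorem MonotoneOp.mul_wnorm_sub_le {A : (Fin p → ℝ) → Set (Fin p → ℝ)} (hA : MonotoneOp A)
    (hH : H.PosDef) {g z u v : Fin p → ℝ} {t t' : ℝ}
    (hu : -(t • (g + H *ᵥ (u - z))) ∈ A u) (hv : -(t' • (g + H *ᵥ (v - z))) ∈ A v) :
    t' * wnorm H (v - u) ≤ |t - t'| * wnorm H (H⁻¹ *ᵥ g + (u - z)) := by
  set w := H⁻¹ *ᵥ g + (u - z)
  set d := v - u
  have hdiff : -(t • (g + H *ᵥ (u - z))) - -(t' • (g + H *ᵥ (v - z)))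
      = -(H *ᵥ ((t - t') • w - t' • d)) := by
    conv_lhs => rw [← hH.mulVec_inv_mulVec g]
    simp only [w, d, mulVec_sub, mulVec_add, mulVec_smul]
    module
  have hmono : t' * ((H *ᵥ d) ⬝ᵥ d) ≤ (t - t') * ((H *ᵥ w) ⬝ᵥ d) := by
    have h := hA u v _ _ hu hv
    rw [hdiff, show u - v = -d by simp [d], neg_dotProduct, dotProduct_neg, neg_neg] at h
    simpa only [mulVec_sub, mulVec_smul, sub_dotProduct, smul_dotProduct, smul_eq_mul,
      sub_nonneg] using h
  have hcs : t' * wnorm H d * wnorm H d ≤ |t - t'| * wnorm H w * wnorm H d :=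
    calc t' * wnorm H d * wnorm H d = t' * ((H *ᵥ d) ⬝ᵥ d) := by
          rw [← wnorm_sq hH.posSemidef]; ring
      _ ≤ (t - t') * ((H *ᵥ w) ⬝ᵥ d) := hmono
      _ ≤ |(t - t') * ((H *ᵥ w) ⬝ᵥ d)| := le_abs_self _
      _ = |t - t'| * |(H *ᵥ w) ⬝ᵥ d| := abs_mul _ _
      _ ≤ |t - t'| * (wnorm H w * wnorm H d) := by
        gcongr; exact abs_dotProduct_mulVec_le_wnorm_mul_wnorm hH.posSemidef w d
      _ = |t - t'| * wnorm H w * wnorm H d := by ring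
  rcases (wnorm_nonneg H d).eq_or_lt with hd | hd
  · rw [← hd, mul_zero]
    exact mul_nonneg (abs_nonneg _) (wnorm_nonneg H w)
  · exact le_of_mul_le_mul_right hcs hd

theorem penalty_update_decrement_bound_general {p : ℕ}
    (Z : Set (Fin p → ℝ))
    (gradF : (Fin p → ℝ) → (Fin p → ℝ))
    (hessF : (Fin p → ℝ) → Matrix (Fin p) (Fin p) ℝ)
    (hpd : ∀ z ∈ interior Z, (hessF z).PosDef)
    (ν : ℝ)
    (hbar : ∀ z ∈ interior Z, ∀ u : Fin p → ℝ,
      2 * ((gradF z) ⬝ᵥ u) - ((hessF z) *ᵥ u) ⬝ᵥ u ≤ ν)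
    (A : (Fin p → ℝ) → Set (Fin p → ℝ)) (hA : MonotoneOp A)
    (σ t tplus : ℝ) (hσ0 : 0 < σ) (hσ1 : σ < 1) (ht : 0 < t)
    (htplus : tplus = (1 - σ) * t)
    (z : Fin p → ℝ) (hz : z ∈ interior Z)
    (ubar zbar : Fin p → ℝ)
    (hubar : -(t • (gradF z + (hessF z) *ᵥ (ubar - z))) ∈ A ubar)
    (hzbar : -(tplus • (gradF z + (hessF z) *ᵥ (zbar - z))) ∈ A zbar) :
    wnorm (hessF z) (zbar - ubar) ≤
      (σ / (1 - σ)) * (wnorm (hessF z)⁻¹ (gradF z) + wnorm (hessF z) (ubar - z)) ∧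
    wnorm (hessF z) (z - zbar) ≤
      wnorm (hessF z) (z - ubar) +
        (σ / (1 - σ)) * (Real.sqrt ν + wnorm (hessF z) (z - ubar)) := by
  have hH := hpd z hz
  have hpsd := hH.posSemidef
  have hgap : |t - tplus| = σ * t := by
    rw [htplus, show t - (1 - σ) * t = σ * t by ring, abs_of_pos (mul_pos hσ0 ht)]
  have hkey := hA.mul_wnorm_sub_le hH hubar hzbar
  rw [hgap, htplus] at hkey
  have hsplit : wnorm (hessF z) ((hessF z)⁻¹ *ᵥ gradF z + (ubar - z)) ≤
      wnorm (hessF z)⁻¹ (gradF z) + wnorm (hessF z) (ubar - z) := by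
    rw [wnorm_inv_eq_wnorm_inv_mulVec hH]
    exact wnorm_add_le hpsd _ _
  have hfirst : wnorm (hessF z) (zbar - ubar) ≤
      (σ / (1 - σ)) * (wnorm (hessF z)⁻¹ (gradF z) + wnorm (hessF z) (ubar - z)) := by
    rw [div_mul_eq_mul_div, le_div_iff₀ (by linarith), ← mul_le_mul_iff_of_pos_right ht]
    linarith [mul_le_mul_of_nonneg_left hsplit (mul_pos hσ0 ht).le]
  refine ⟨hfirst, ?_⟩
  calc wnorm (hessF z) (z - zbar) ≤ wnorm (hessF z) (z - ubar) + wnorm (hessF z) (zbar - ubar) := by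
        rw [wnorm_sub_rev hpsd zbar]
        simpa using wnorm_add_le hpsd (z - ubar) (ubar - zbar)
    _ ≤ _ := by
        rw [wnorm_sub_rev hpsd ubar] at hfirst
        gcongr
        exact hfirst.trans (by gcongr; exact wnorm_inv_le_sqrt hH (hbar z hz))

/-- Effect of the penalty-parameter update `t₊ = (1-σ)t` on the generalized Newton
decrement: with `ū`, `z̄₊` the solutions of the linearized inclusions at `t` and `t₊`,
one has `‖z̄₊ - ū‖_z ≤ (σ/(1-σ))(‖∇F(z)‖*_z + ‖ū - z‖_z)` and hence
`λ_{t₊}(z) ≤ λ_t(z) + (σ/(1-σ))(√ν + λ_t(z))`. -/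
theorem penalty_update_decrement_bound {p : ℕ}
    (Z : Set (Fin p → ℝ)) (hZconv : Convex ℝ Z)
    (F : (Fin p → ℝ) → ℝ)
    (gradF : (Fin p → ℝ) → (Fin p → ℝ))
    (hessF : (Fin p → ℝ) → Matrix (Fin p) (Fin p) ℝ)
    (hGrad : ∀ z ∈ interior Z, ∀ v : Fin p → ℝ,
      deriv (fun s : ℝ => F (z + s • v)) 0 = (gradF z) ⬝ᵥ v)
    (hHess : ∀ z ∈ interior Z, ∀ v : Fin p → ℝ,
      iteratedDeriv 2 (fun s : ℝ => F (z + s • v)) 0 = ((hessF z) *ᵥ v) ⬝ᵥ v)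
    (hpd : ∀ z ∈ interior Z, (hessF z).PosDef)
    (hsc : ∀ z ∈ interior Z, ∀ v : Fin p → ℝ,
      |iteratedDeriv 3 (fun s : ℝ => F (z + s • v)) 0| ≤
        2 * (((hessF z) *ᵥ v) ⬝ᵥ v) ^ ((3 : ℝ) / 2))
    (ν : ℝ) (hν : 0 < ν)
    (hbar : ∀ z ∈ interior Z, ∀ u : Fin p → ℝ,
      2 * ((gradF z) ⬝ᵥ u) - ((hessF z) *ᵥ u) ⬝ᵥ u ≤ ν)
    (A : (Fin p → ℝ) → Set (Fin p → ℝ)) (hA : MonotoneOp A)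
    (σ t tplus : ℝ) (hσ0 : 0 < σ) (hσ1 : σ < 1) (ht : 0 < t)
    (htplus : tplus = (1 - σ) * t)
    (z : Fin p → ℝ) (hz : z ∈ interior Z)
    (ubar zbar : Fin p → ℝ)
    (hubar : -(t • (gradF z + (hessF z) *ᵥ (ubar - z))) ∈ A ubar)
    (hzbar : -(tplus • (gradF z + (hessF z) *ᵥ (zbar - z))) ∈ A zbar) :
    wnorm (hessF z) (zbar - ubar) ≤
      (σ / (1 - σ)) * (wnorm (hessF z)⁻¹ (gradF z) + wnorm (hessF z) (ubar - z)) ∧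
    wnorm (hessF z) (z - zbar) ≤
      wnorm (hessF z) (z - ubar) +
        (σ / (1 - σ)) * (Real.sqrt ν + wnorm (hessF z) (z - ubar)) :=
  penalty_update_decrement_bound_general Z gradF hessF hpd ν hbar A hA σ t tplus hσ0 hσ1 ht htplus z
    hz ubar zbar hubar hzbar
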